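/- arXiv:2510.09024 — 9 statements merged into one kernel-verified Lean document; each statement's English description precedes it below -/
import Mathlib

section
/- Let G = (V, E) be a finite simple graph and let A ⊆ V. Then G is collapsible onto A if and only if for every pair of non-adjacent vertices x, y ∈ A, every minimal xy-separator in G is contained in A. (Theorem 1 of the paper.) -/
/-- `S` separates `X` from `Y` in `G`: every path in `G` from a vertex of `X`
to a vertex of `Y` contains a vertex of `S`. -/
def Separates {V : Type*} (G : SimpleGraph V) (X Y S : Set V) : Prop :=
  ∀ ⦃a b : V⦄, a ∈ X → b ∈ Y → ∀ p : G.Walk a b, p.IsPath → ∃ s ∈ S, s ∈ p.support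

/-- `S` is an `xy`-separator in `G`: `S ⊆ V \ {x, y}` and `S` separates `{x}` from `{y}`. -/
def IsSeparator {V : Type*} (G : SimpleGraph V) (x y : V) (S : Set V) : Prop :=
  S ⊆ ({x, y} : Set V)ᶜ ∧ Separates G {x} {y} S

/-- `S` is a minimal `xy`-separator in `G`: it is an `xy`-separator and no proper
subset of `S` is an `xy`-separator. -/
def IsMinSeparator {V : Type*} (G : SimpleGraph V) (x y : V) (S : Set V) : Prop :=
  IsSeparator G x y S ∧ ∀ T ⊂ S, ¬ IsSeparator G x y T

/-- `G` is collapsible onto `A` (Asmussen–Edwards characterization): for all pairwise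
disjoint `X, Y, Z` with `X ⊆ A` and `Y ⊆ A`, if `Z` separates `X` from `Y`, then so
does `Z ∩ A`. -/
def Collapsible {V : Type*} (G : SimpleGraph V) (A : Set V) : Prop :=
  ∀ X Y Z : Set V, X ⊆ A → Y ⊆ A → Disjoint X Y → Disjoint X Z → Disjoint Y Z →
    Separates G X Y Z → Separates G X Y (Z ∩ A)

/-- The neighbour set `N_G(W)`: vertices outside `W` adjacent in `G` to some vertex of `W`. -/
def nbhd {V : Type*} (G : SimpleGraph V) (W : Set V) : Set V :=
  {v | v ∉ W ∧ ∃ w ∈ W, G.Adj v w}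

/-- `M` is the vertex set of a connected component of the induced subgraph `G_W`. -/
def IsCompOf {V : Type*} (G : SimpleGraph V) (W M : Set V) : Prop :=
  ∃ c : (G.induce W).ConnectedComponent, M = Subtype.val '' c.supp

/-- A subset of `V` is complete in `G` if its vertices are pairwise adjacent. -/
def CompleteIn {V : Type*} (G : SimpleGraph V) (S : Set V) : Prop :=
  ∀ x ∈ S, ∀ y ∈ S, x ≠ y → G.Adj x y

/-!
If `G` is collapsible onto `A` and `S` is a minimal `xy`-separator with `x, y ∈ A`, then
`S ∩ A` is again an `xy`-separator, so minimality forces `S ⊆ A`. Conversely, if `Z`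
separates `X ⊆ A` from `Y ⊆ A`, then for `a ∈ X`, `b ∈ Y` (non-adjacent, since `Z` misses
both) `Z` contains a minimal `ab`-separator, which lies in `A` by hypothesis and hence in
`Z ∩ A`; it meets every `a`–`b` path.
-/

section

variable {V : Type*} {G : SimpleGraph V}

theorem Separates.mono {X Y S T : Set V} (h : Separates G X Y S) (hST : S ⊆ T) :
    Separates G X Y T := fun _ _ ha hb p hp =>
  let ⟨s, hs, hsp⟩ := h ha hb p hp
  ⟨s, hST hs, hsp⟩

theorem separates_of_forall_separates_singleton {X Y S : Set V}
    (h : ∀ a ∈ X, ∀ b ∈ Y, Separates G {a} {b} S) : Separates G X Y S :=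
  fun a b ha hb => h a ha b hb rfl rfl

theorem Separates.not_adj {X Y S : Set V} {a b : V} (h : Separates G X Y S)
    (ha : a ∈ X) (hb : b ∈ Y) (haS : a ∉ S) (hbS : b ∉ S) : ¬ G.Adj a b := by
  intro hab
  obtain ⟨s, hs, hsp⟩ := h ha hb (.cons hab .nil) (by simp [hab.ne])
  simp only [SimpleGraph.Walk.support_cons, SimpleGraph.Walk.support_nil,
    List.mem_cons, List.not_mem_nil, or_false] at hsp
  rcases hsp with rfl | rfl
  exacts [haS hs, hbS hs]

theorem Separates.isSeparator {X Y S : Set V} {a b : V} (h : Separates G X Y S)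
    (ha : a ∈ X) (hb : b ∈ Y) (haS : a ∉ S) (hbS : b ∉ S) : IsSeparator G a b S := by
  refine ⟨fun s hs hab => ?_, fun a' b' ha' hb' => ?_⟩
  · rcases hab with rfl | rfl
    exacts [haS hs, hbS hs]
  · rw [Set.mem_singleton_iff] at ha' hb'
    subst ha' hb'
    exact h ha hb

theorem isMinSeparator_iff_minimal {x y : V} {S : Set V} :
    IsMinSeparator G x y S ↔ Minimal (IsSeparator G x y) S :=
  Set.minimal_iff_forall_ssubset.symm

theorem IsSeparator.exists_isMinSeparator_subset {x y : V} {S : Set V}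
    (hS : IsSeparator G x y S) (hfin : S.Finite) : ∃ T ⊆ S, IsMinSeparator G x y T := by
  obtain ⟨T, hTS, hT⟩ := (hfin.finite_subsets.inter_of_left {T | IsSeparator G x y T}
    |>.exists_le_minimal (a := S) ⟨Set.Subset.rfl, hS⟩)
  exact ⟨T, hTS, isMinSeparator_iff_minimal.2
    ⟨hT.prop.2, fun U hU hUT => hT.le_of_le ⟨hUT.trans hTS, hU⟩ hUT⟩⟩

theorem IsMinSeparator.subset_of_isSeparator_inter {x y : V} {S B : Set V}
    (hS : IsMinSeparator G x y S) (h : IsSeparator G x y (S ∩ B)) : S ⊆ B :=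
  Set.inter_eq_left.1 <| (isMinSeparator_iff_minimal.1 hS).eq_of_subset h Set.inter_subset_left

theorem Collapsible.isSeparator_inter {A S : Set V} {x y : V} (hc : Collapsible G A)
    (hx : x ∈ A) (hy : y ∈ A) (hxy : x ≠ y) (hS : IsSeparator G x y S) :
    IsSeparator G x y (S ∩ A) := by
  have hxS : x ∉ S := fun h => hS.1 h (.inl rfl)
  have hyS : y ∉ S := fun h => hS.1 h (.inr rfl)
  exact ⟨Set.inter_subset_left.trans hS.1, hc {x} {y} S (by simpa) (by simpa)
    (by simpa) (by simpa) (by simpa) hS.2⟩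

end

/-- Theorem 1: `G` is collapsible onto `A` iff every minimal `xy`-separator, for every
pair of non-adjacent vertices `x, y ∈ A`, is contained in `A`. -/
theorem collapsible_iff_every_min_separator_subset
    {V : Type*} [Fintype V] (G : SimpleGraph V) (A : Set V) :
    Collapsible G A ↔
      ∀ x ∈ A, ∀ y ∈ A, x ≠ y → ¬ G.Adj x y →
        ∀ S : Set V, IsMinSeparator G x y S → S ⊆ A := by
  constructor
  · intro hc x hx y hy hxy _ S hS
    exact hS.subset_of_isSeparator_inter (hc.isSeparator_inter hx hy hxy hS.1)
  · intro h X Y Z hXA hYA hXY hXZ hYZ hZ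
    refine separates_of_forall_separates_singleton fun a ha b hb => ?_
    have haZ : a ∉ Z := hXZ.notMem_of_mem_left ha
    have hbZ : b ∉ Z := hYZ.notMem_of_mem_left hb
    obtain ⟨S, hSZ, hS⟩ := (hZ.isSeparator ha hb haZ hbZ).exists_isMinSeparator_subset Z.toFinite
    have hSA : S ⊆ A :=
      h a (hXA ha) b (hYA hb) (hXY.ne_of_mem ha hb) (hZ.not_adj ha hb haZ hbZ) S hS
    exact hS.1.2.mono (Set.subset_inter hSZ hSA)
end

section
/- Let G = (V, E) be a finite simple graph and let A ⊆ V. Then G is collapsible onto A if and only if for every pair of non-adjacent vertices x, y ∈ A, there exists at least one minimal xy-separator in G that is contained in A. (Corollary 1 of the paper.) -/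
open SimpleGraph in
lemma exists_min_sep {V : Type*} [Fintype V] (G : SimpleGraph V) (x y : V) :
    ∀ (S : Set V), IsSeparator G x y S → ∃ T ⊆ S, IsMinSeparator G x y T := by
  classical
  intro S hS
  generalize hn : S.ncard = n
  induction n using Nat.strong_induction_on generalizing S with
  | _ n ih =>
    by_cases hmin : ∀ T ⊂ S, ¬ IsSeparator G x y T
    · exact ⟨S, subset_rfl, hS, hmin⟩
    · push_neg at hmin
      obtain ⟨T, hTS, hT⟩ := hmin
      obtain ⟨U, hUT, hU⟩ := ih T.ncard (hn ▸ Set.ncard_lt_ncard hTS (Set.toFinite S)) T hT rfl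
      exact ⟨U, hUT.trans hTS.subset, hU⟩

open SimpleGraph in
lemma walk_to_A {V : Type*} (G : SimpleGraph V) (A : Set V)
    (H : ∀ a d : V, a ∈ A → d ∈ A → a ≠ d →
      (∃ q : G.Walk a d, ∀ v ∈ q.support, v = a ∨ v = d ∨ v ∉ A) → G.Adj a d) :
    ∀ {c b : V} (r : G.Walk c b), b ∈ A → ∀ a, a ∈ A →
      (a = c ∨ (c ∉ A ∧ ∃ w : G.Walk a c, ∀ v ∈ w.support, v = a ∨ v ∉ A)) →
      ∃ q : G.Walk a b, ∀ v ∈ q.support, v ∈ A ∧ (v = a ∨ v ∈ r.support) := by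
  intro c b r
  induction r with
  | nil =>
    rename_i u
    intro hb a ha hcase
    rcases hcase with rfl | ⟨hcA, _⟩
    · exact ⟨Walk.nil, by intro v hv; simp at hv; subst hv; exact ⟨ha, Or.inl rfl⟩⟩
    · exact absurd hb hcA
  | @cons c d b h r' ih =>
    intro hb a ha hcase
    by_cases hd : d ∈ A
    · by_cases had : a = d
      · subst had
        obtain ⟨q, hq⟩ := ih hb a ha (Or.inl rfl)
        refine ⟨q, fun v hv => ⟨(hq v hv).1, (hq v hv).2.imp_right fun h2 => ?_⟩⟩
        rw [Walk.support_cons]; exact List.mem_cons_of_mem _ h2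
      · have hadj : G.Adj a d := by
          rcases hcase with rfl | ⟨hcA, w, hw⟩
          · exact h
          · refine H a d ha hd had ⟨w.concat h, fun v hv => ?_⟩
            simp only [Walk.support_concat, List.concat_eq_append, List.mem_append, List.mem_singleton] at hv
            rcases hv with hv | rfl
            · rcases hw v hv with rfl | hvA
              · exact Or.inl rfl
              · exact Or.inr (Or.inr hvA)
            · exact Or.inr (Or.inl rfl)
        obtain ⟨q, hq⟩ := ih hb d hd (Or.inl rfl)
        refine ⟨Walk.cons hadj q, fun v hv => ?_⟩
        rw [Walk.support_cons, List.mem_cons] at hv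
        rcases hv with rfl | hv
        · exact ⟨ha, Or.inl rfl⟩
        · obtain ⟨h1, h2⟩ := hq v hv
          refine ⟨h1, Or.inr ?_⟩
          rw [Walk.support_cons]
          rcases h2 with rfl | h2
          · exact List.mem_cons_of_mem _ r'.start_mem_support
          · exact List.mem_cons_of_mem _ h2
    · have hw' : ∃ w : G.Walk a d, ∀ v ∈ w.support, v = a ∨ v ∉ A := by
        rcases hcase with rfl | ⟨hcA, w, hw⟩
        · exact ⟨Walk.cons h Walk.nil, by
            intro v hv; simp [Walk.support_cons] at hv
            rcases hv with rfl | rfl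
            · exact Or.inl rfl
            · exact Or.inr hd⟩
        · refine ⟨w.concat h, fun v hv => ?_⟩
          simp only [Walk.support_concat, List.concat_eq_append, List.mem_append, List.mem_singleton] at hv
          rcases hv with hv | rfl
          · exact hw v hv
          · exact Or.inr hd
      obtain ⟨q, hq⟩ := ih hb a ha (Or.inr ⟨hd, hw'⟩)
      refine ⟨q, fun v hv => ⟨(hq v hv).1, (hq v hv).2.imp_right fun h2 => ?_⟩⟩
      rw [Walk.support_cons]; exact List.mem_cons_of_mem _ h2

open SimpleGraph in
theorem main_thm
    {V : Type*} [Fintype V] (G : SimpleGraph V) (A : Set V) :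
    (∀ X Y Z : Set V, X ⊆ A → Y ⊆ A → Disjoint X Y → Disjoint X Z → Disjoint Y Z →
      Separates G X Y Z → Separates G X Y (Z ∩ A)) ↔
      ∀ x ∈ A, ∀ y ∈ A, x ≠ y → ¬ G.Adj x y →
        ∃ S : Set V, IsMinSeparator G x y S ∧ S ⊆ A := by
  classical
  constructor
  · intro hc x hx y hy hxy hadj
    have hsep : Separates G {x} {y} ({x, y} : Set V)ᶜ := by
      rintro a b (rfl : a = x) (rfl : b = y) p hp
      cases p with
      | nil => exact absurd rfl hxy
      | @cons _ v _ h p' =>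
        refine ⟨v, ?_, ?_⟩
        · rw [Walk.cons_isPath_iff] at hp
          simp only [Set.mem_compl_iff, Set.mem_insert_iff, Set.mem_singleton_iff]
          rintro (rfl | rfl)
          · exact hp.2 p'.start_mem_support
          · exact hadj h
        · rw [Walk.support_cons]
          exact List.mem_cons_of_mem _ p'.start_mem_support
    have hZA := hc {x} {y} ({x, y} : Set V)ᶜ
      (Set.singleton_subset_iff.mpr hx) (Set.singleton_subset_iff.mpr hy)
      (Set.disjoint_singleton_left.mpr (by simpa using hxy))
      (Set.disjoint_singleton_left.mpr (by simp))
      (Set.disjoint_singleton_left.mpr (by simp)) hsep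
    have hSsep : IsSeparator G x y (({x, y} : Set V)ᶜ ∩ A) :=
      ⟨Set.inter_subset_left, hZA⟩
    obtain ⟨T, hTsub, hTmin⟩ := exists_min_sep G x y _ hSsep
    exact ⟨T, hTmin, hTsub.trans Set.inter_subset_right⟩
  · intro hms X Y Z hXA hYA hXY hXZ hYZ hsep
    have H : ∀ a d : V, a ∈ A → d ∈ A → a ≠ d →
        (∃ q : G.Walk a d, ∀ v ∈ q.support, v = a ∨ v = d ∨ v ∉ A) → G.Adj a d := by
      intro a d ha hd had ⟨q, hq⟩
      by_contra hadj
      obtain ⟨S, ⟨⟨hSsub, hSsep⟩, -⟩, hSA⟩ := hms a ha d hd had hadj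
      obtain ⟨s, hsS, hss⟩ := hSsep rfl rfl q.bypass q.bypass_isPath
      have hs := hq s (q.support_bypass_subset hss)
      have := hSsub hsS
      simp only [Set.mem_compl_iff, Set.mem_insert_iff, Set.mem_singleton_iff, not_or] at this
      rcases hs with rfl | rfl | hsA
      · exact this.1 rfl
      · exact this.2 rfl
      · exact hsA (hSA hsS)
    intro a b haX hbY p hp
    by_contra hno
    push_neg at hno
    obtain ⟨q, hq⟩ := walk_to_A G A H p (hYA hbY) a (hXA haX) (Or.inl rfl)
    obtain ⟨s, hsZ, hss⟩ := hsep haX hbY q.bypass q.bypass_isPath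
    obtain ⟨hsA, hs⟩ := hq s (q.support_bypass_subset hss)
    rcases hs with rfl | hs
    · exact (hXZ.ne_of_mem haX hsZ) rfl
    · exact hno s ⟨hsZ, hsA⟩ hs

/-- Corollary 1: `G` is collapsible onto `A` iff for every pair of non-adjacent
vertices `x, y ∈ A` there is at least one minimal `xy`-separator contained in `A`. -/
theorem collapsible_iff_exists_min_separator_subset
    {V : Type*} [Fintype V] (G : SimpleGraph V) (A : Set V) :
    Collapsible G A ↔
      ∀ x ∈ A, ∀ y ∈ A, x ≠ y → ¬ G.Adj x y →
        ∃ S : Set V, IsMinSeparator G x y S ∧ S ⊆ A := by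
  exact main_thm G A
end

section
/- Let G = (V, E) be a finite simple graph and let A ⊆ V. The following two conditions are equivalent: (i) for every pair of non-adjacent vertices x, y ∈ A, there exists at least one minimal xy-separator in G contained in A; (ii) for every pair of non-adjacent vertices x, y ∈ A, every minimal xy-separator in G is contained in A. (Combination of Theorem 1 and Corollary 1 of the paper.) -/
/-- Lemma D: under hypothesis (i), two distinct vertices of `A` joined by a walk whose
support meets `A` only at the endpoints must be adjacent. -/
lemma lemD {V : Type*} [Fintype V] (G : SimpleGraph V) (A : Set V)
    (hi : ∀ x ∈ A, ∀ y ∈ A, x ≠ y → ¬ G.Adj x y →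
        ∃ S : Set V, IsMinSeparator G x y S ∧ S ⊆ A)
    {u v : V} (hu : u ∈ A) (hv : v ∈ A) (huv : u ≠ v)
    (w : G.Walk u v) (hw : ∀ t ∈ w.support, t ∈ A → t = u ∨ t = v) : G.Adj u v := by
  classical
  by_contra hadj
  obtain ⟨T, hT, hTA⟩ := hi u hu v hv huv hadj
  obtain ⟨t, htT, hts⟩ := hT.1.2 rfl rfl w.bypass w.bypass_isPath
  have htw : t ∈ w.support := w.support_bypass_subset hts
  have := hw t htw (hTA htT)
  have hcompl := hT.1.1 htT
  simp only [Set.mem_compl_iff, Set.mem_insert_iff, Set.mem_singleton_iff] at hcompl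
  tauto

/-- Lemma F: walk surgery. -/
lemma lemF {V : Type*} [Fintype V] (G : SimpleGraph V) (A S : Set V) (s : V) (hsA : s ∉ A)
    (hi : ∀ x ∈ A, ∀ y ∈ A, x ≠ y → ¬ G.Adj x y →
        ∃ S : Set V, IsMinSeparator G x y S ∧ S ⊆ A)
    :
    ∀ {c y : V} (w : G.Walk c y), y ∈ A → (∀ t ∈ w.support, t ∈ S → t = s) →
      ∃ v, v ∈ A ∧ (∃ w' : G.Walk v y, ∀ t ∈ w'.support, t ∉ S) ∧
        ∃ wpre : G.Walk c v, ∀ t ∈ wpre.support, t ∈ A → t = v := by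
  intro c y w
  induction w with
  | @nil u =>
    intro hy h
    have hyS : u ∉ S := fun hyS => hsA ((h u (by simp) hyS) ▸ hy)
    exact ⟨u, hy, ⟨.nil, by simpa using hyS⟩, ⟨.nil, by simp⟩⟩
  | @cons c c' y h q ih =>
    intro hy hsup
    have hq : ∀ t ∈ q.support, t ∈ S → t = s := fun t ht => hsup t (by simp [ht])
    obtain ⟨v, hvA, ⟨w', hw'⟩, ⟨wpre, hpre⟩⟩ := ih hy hq
    by_cases hcA : c ∈ A
    · have hcS : c ∉ S := fun hcS => hsA ((hsup c (by simp) hcS) ▸ hcA)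
      by_cases hcv : c = v
      · subst hcv
        exact ⟨c, hcA, ⟨w', hw'⟩, ⟨.nil, by simp⟩⟩
      · have hadj : G.Adj c v := by
          refine lemD G A hi hcA hvA hcv (SimpleGraph.Walk.cons h wpre) ?_
          intro t ht htA
          rcases (by simpa using ht : t = c ∨ t ∈ wpre.support) with h1 | h1
          · exact Or.inl h1
          · exact Or.inr (hpre t h1 htA)
        refine ⟨c, hcA, ⟨SimpleGraph.Walk.cons hadj w', ?_⟩, ⟨.nil, by simp⟩⟩
        intro t ht
        rcases (by simpa using ht : t = c ∨ t ∈ w'.support) with h1 | h1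
        · exact h1 ▸ hcS
        · exact hw' t h1
    · refine ⟨v, hvA, ⟨w', hw'⟩, ⟨SimpleGraph.Walk.cons h wpre, ?_⟩⟩
      intro t ht htA
      rcases (by simpa using ht : t = c ∨ t ∈ wpre.support) with h1 | h1
      · exact absurd (h1 ▸ htA) hcA
      · exact hpre t h1 htA

/-- Existence of a minimal separator below any separator, by induction on cardinality. -/
lemma exists_min {V : Type*} [Fintype V] (G : SimpleGraph V) (x y : V) :
    ∀ n (S : Set V), S.ncard ≤ n → IsSeparator G x y S →
      ∃ T, T ⊆ S ∧ IsMinSeparator G x y T := by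
  intro n
  induction n with
  | zero =>
    intro S hcard hS
    have hSe : S = ∅ := by
      have := S.toFinite
      rw [← Set.ncard_eq_zero this]
      omega
    subst hSe
    exact ⟨∅, subset_rfl, hS, fun T hT => absurd (Set.empty_subset T) hT.2⟩
  | succ n ih =>
    intro S hcard hS
    by_cases hmin : ∀ T, T ⊂ S → ¬ IsSeparator G x y T
    · exact ⟨S, subset_rfl, hS, hmin⟩
    · push_neg at hmin
      obtain ⟨T, hTS, hT⟩ := hmin
      have hlt : T.ncard < S.ncard := Set.ncard_lt_ncard hTS S.toFinite
      obtain ⟨T', hT'T, hT'⟩ := ih T (by omega) hT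
      exact ⟨T', hT'T.trans hTS.subset, hT'⟩

/-- Theorem 1 + Corollary 1: the existential and universal minimal-separator
containment conditions are equivalent. -/
theorem exists_min_separator_subset_iff_every_min_separator_subset
    {V : Type*} [Fintype V] (G : SimpleGraph V) (A : Set V) :
    (∀ x ∈ A, ∀ y ∈ A, x ≠ y → ¬ G.Adj x y →
        ∃ S : Set V, IsMinSeparator G x y S ∧ S ⊆ A) ↔
    (∀ x ∈ A, ∀ y ∈ A, x ≠ y → ¬ G.Adj x y →
        ∀ S : Set V, IsMinSeparator G x y S → S ⊆ A) := by
  constructor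
  · intro hi x hx y hy hxy hadj S hS s hsS
    by_contra hsA
    -- S \ {s} is not a separator, but it is contained in {x,y}ᶜ, so Separates fails
    have hss : S \ {s} ⊂ S := ⟨Set.diff_subset, fun h => (h hsS).2 rfl⟩
    have hns := hS.2 (S \ {s}) hss
    have hsub : S \ {s} ⊆ ({x, y} : Set V)ᶜ := (Set.diff_subset).trans hS.1.1
    have hnsep : ¬ Separates G {x} {y} (S \ {s}) := fun h => hns ⟨hsub, h⟩
    unfold Separates at hnsep
    push_neg at hnsep
    obtain ⟨a, b, ha, hb, p, hp, hpav⟩ := hnsep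
    rw [Set.mem_singleton_iff] at ha hb
    subst ha; subst hb
    have hpS : ∀ t ∈ p.support, t ∈ S → t = s := by
      intro t ht htS
      by_contra hts
      exact hpav t ⟨htS, hts⟩ ht
    obtain ⟨v, hvA, ⟨w', hw'⟩, ⟨wpre, hpre⟩⟩ := lemF G A S s hsA hi p hy hpS
    have hxv : a = v := hpre a wpre.start_mem_support hx
    subst hxv
    classical
    obtain ⟨t, htS, hts⟩ := hS.1.2 rfl rfl w'.bypass w'.bypass_isPath
    exact hw' t (w'.support_bypass_subset hts) htS
  · intro hii x hx y hy hxy hadj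
    have hsep0 : IsSeparator G x y ({x, y} : Set V)ᶜ := by
      refine ⟨subset_rfl, ?_⟩
      intro a b ha hb p hp
      rw [Set.mem_singleton_iff] at ha hb
      subst ha; subst hb
      cases p with
      | nil => exact absurd rfl hxy
      | @cons _ c _ h q =>
        refine ⟨c, ?_, by simp⟩
        simp only [Set.mem_compl_iff, Set.mem_insert_iff, Set.mem_singleton_iff]
        push_neg
        constructor
        · intro hcx
          subst hcx
          exact G.irrefl h
        · intro hcy
          subst hcy
          exact hadj h
    obtain ⟨T, hTsub, hTmin⟩ := exists_min G x y _ _ le_rfl hsep0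
    exact ⟨T, hTmin, hii x hx y hy hxy hadj T hTmin⟩
end

section
/- Let G = (V, E) be a finite simple graph, let A ⊆ V, and let M be the vertex set of a connected component of the induced subgraph G_{V \ A}. If x, y ∈ N_G(M) are non-adjacent vertices of G, then no xy-separator of G is contained in A; in particular, no minimal xy-separator of G is contained in A. (The key step in the sufficiency direction of Theorem 1 of the paper.) -/
/-- Key step in the sufficiency direction of Theorem 1: if `M` is a connected
component of `G_{V \\ A}` and `x, y ∈ N_G(M)` are non-adjacent, then no
`xy`-separator (in particular no minimal `xy`-separator) is contained in `A`. -/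
theorem no_separator_subset_of_component_neighbours
    {V : Type*} [Fintype V] (G : SimpleGraph V) (A M : Set V)
    (hM : IsCompOf G Aᶜ M) (x y : V)
    (hx : x ∈ nbhd G M) (hy : y ∈ nbhd G M)
    (hne : x ≠ y) (hadj : ¬ G.Adj x y) :
    (∀ S : Set V, IsSeparator G x y S → ¬ S ⊆ A) ∧
    (∀ S : Set V, IsMinSeparator G x y S → ¬ S ⊆ A) := by

  classical
  obtain ⟨c, hc⟩ := hM
  obtain ⟨hxM, m, hmM, hxm⟩ := hx
  obtain ⟨hyM, m', hm'M, hym'⟩ := hy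
  have hMA : M ⊆ Aᶜ := by
    rw [hc]; rintro _ ⟨⟨v, hv⟩, _, rfl⟩; exact hv
  -- get a walk from m to m' inside M
  rw [hc] at hmM hm'M
  obtain ⟨⟨mm, hmm⟩, hmc, hmeq⟩ := hmM
  obtain ⟨⟨mm', hmm'⟩, hm'c, hm'eq⟩ := hm'M
  have hreach : (G.induce Aᶜ).Reachable ⟨mm, hmm⟩ ⟨mm', hmm'⟩ := by
    have : (G.induce Aᶜ).connectedComponentMk ⟨mm, hmm⟩ =
        (G.induce Aᶜ).connectedComponentMk ⟨mm', hmm'⟩ := by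
      rw [SimpleGraph.ConnectedComponent.mem_supp_iff] at hmc hm'c
      rw [hmc, hm'c]
    exact SimpleGraph.ConnectedComponent.exact this
  obtain ⟨w⟩ := hreach
  -- map to G
  let f : G.induce Aᶜ →g G := (SimpleGraph.Embedding.induce Aᶜ).toHom
  have hw : ∀ v ∈ (w.map f).support, v ∈ M := by
    intro v hv
    rw [SimpleGraph.Walk.support_map, List.mem_map] at hv
    obtain ⟨u, hu, rfl⟩ := hv
    rw [hc]
    have : u ∈ c.supp := by
      rw [SimpleGraph.ConnectedComponent.mem_supp_iff]
      rw [SimpleGraph.ConnectedComponent.mem_supp_iff] at hmc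
      rw [← hmc]
      exact SimpleGraph.ConnectedComponent.sound
        ((SimpleGraph.Walk.takeUntil w u hu).reverse.reachable)
    exact ⟨u, this, rfl⟩
  subst hmeq hm'eq
  -- walk x - m - ... - m' - y
  have hxm' : G.Adj x (f ⟨mm, hmm⟩) := hxm
  have hym'' : G.Adj (f ⟨mm', hmm'⟩) y := hym'.symm
  let W : G.Walk x y := SimpleGraph.Walk.cons hxm' ((w.map f).append (hym''.toWalk))
  have hWsupp : ∀ v ∈ W.support, v = x ∨ v = y ∨ v ∈ M := by
    intro v hv
    simp only [W, SimpleGraph.Walk.support_cons, List.mem_cons,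
      SimpleGraph.Walk.mem_support_append_iff] at hv
    rcases hv with rfl | hv | hv
    · exact Or.inl rfl
    · exact Or.inr (Or.inr (hw v hv))
    · simp only [SimpleGraph.Walk.support_cons, SimpleGraph.Walk.support_nil,
        List.mem_cons, List.mem_singleton] at hv
      rcases hv with rfl | hv
      · exact Or.inr (Or.inr (hw _ (SimpleGraph.Walk.end_mem_support _)))
      · simp at hv; exact Or.inr (Or.inl hv)
  have main : ∀ S : Set V, IsSeparator G x y S → ¬ S ⊆ A := by
    intro S hS hSA
    obtain ⟨s, hsS, hsp⟩ := hS.2 rfl rfl W.toPath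
      (SimpleGraph.Walk.bypass_isPath W)
    have hsW : s ∈ W.support := SimpleGraph.Walk.support_bypass_subset W hsp
    have hsxy := hS.1 hsS
    rcases hWsupp s hsW with rfl | rfl | hsM
    · exact hsxy (Or.inl rfl)
    · exact hsxy (Or.inr rfl)
    · exact hMA hsM (hSA hsS)
  exact ⟨main, fun S hS => main S hS.1⟩
end

section
/- Let G = (V, E) be a finite simple graph and let A ⊆ V. Then G is collapsible onto A if and only if for every connected component of the induced subgraph G_{V \ A} with vertex set M, the neighbour set N_G(M) is complete in G. (The characterization of Asmussen and Edwards used throughout the paper's proofs of Theorems 1 and 2.) -/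
/-!
If `G` is collapsible onto `A` and `u ≠ v` are non-adjacent neighbours of a component `M` of
`G_{V \ A}`, then `{u, v}ᶜ` separates `u` from `v`, while its trace `A \ {u, v}` misses the walk
from `u` through `M` to `v`. Conversely, if the neighbours of every component are pairwise
adjacent, every excursion of a walk into `V \ A` between two vertices of `A` can be replaced
by a single edge, so a walk between vertices of `A` shortcuts to a walk inside `A` using only
its own vertices; a separator `Z` meets the shortcut, hence `Z ∩ A` meets the original walk.
-/

open SimpleGraph

lemma Separates.exists_mem_support {V : Type*} {G : SimpleGraph V} {X Y S : Set V}
    (h : Separates G X Y S) {a b : V} (ha : a ∈ X) (hb : b ∈ Y) (p : G.Walk a b) :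
    ∃ s ∈ S, s ∈ p.support := by
  classical
  obtain ⟨s, hs, hmem⟩ := h ha hb p.bypass p.bypass_isPath
  exact ⟨s, hs, p.support_bypass_subset_support hmem⟩

lemma separates_compl_pair {V : Type*} {G : SimpleGraph V} {u v : V} (huv : u ≠ v)
    (hadj : ¬ G.Adj u v) : Separates G {u} {v} ({u, v} : Set V)ᶜ := by
  rintro a b rfl rfl (_ | ⟨had, q⟩) -
  · exact absurd rfl huv
  · rename_i d
    refine ⟨d, ?_, by simp⟩
    rintro (rfl | rfl)
    exacts [G.irrefl had, hadj had]

namespace SimpleGraph.ConnectedComponent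

variable {V : Type*} {G : SimpleGraph V} {s : Set V} (C : (G.induce s).ConnectedComponent)

lemma image_val_supp_subset : Subtype.val '' C.supp ⊆ s := by
  rintro _ ⟨x, -, rfl⟩
  exact x.2

lemma mem_image_val_supp_of_adj {c d : V} (hc : c ∈ Subtype.val '' C.supp) (hd : d ∈ s)
    (hcd : G.Adj c d) : d ∈ Subtype.val '' C.supp := by
  obtain ⟨c, hcC, rfl⟩ := hc
  refine ⟨⟨d, hd⟩, ?_, rfl⟩
  rw [mem_supp_iff] at hcC ⊢
  rw [← hcC, eq_comm, ConnectedComponent.eq]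
  exact (show (G.induce s).Adj c ⟨d, hd⟩ from hcd).reachable

lemma mem_nbhd_of_adj {u m : V} (hu : u ∉ s) (hm : m ∈ Subtype.val '' C.supp)
    (hum : G.Adj u m) : u ∈ nbhd G (Subtype.val '' C.supp) :=
  ⟨fun huC => hu (C.image_val_supp_subset huC), m, hm, hum⟩

lemma nbhd_subset_compl : nbhd G (Subtype.val '' C.supp) ⊆ sᶜ := by
  rintro u ⟨huC, m, hm, hum⟩ hu
  exact huC (C.mem_image_val_supp_of_adj hm hu hum.symm)

lemma exists_walk_support_subset {x y : V} (hx : x ∈ Subtype.val '' C.supp)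
    (hy : y ∈ Subtype.val '' C.supp) : ∃ w : G.Walk x y, ∀ z ∈ w.support, z ∈ s := by
  obtain ⟨x, hxC, rfl⟩ := hx
  obtain ⟨y, hyC, rfl⟩ := hy
  rw [mem_supp_iff] at hxC hyC
  obtain ⟨w⟩ := ConnectedComponent.exact (hxC.trans hyC.symm)
  refine ⟨w.map (Embedding.induce s).toHom, fun z hz => ?_⟩
  obtain ⟨z, -, rfl⟩ := List.mem_map.1 ((Walk.support_map _ _) ▸ hz)
  exact z.2

end SimpleGraph.ConnectedComponent

section

variable {V : Type*} {G : SimpleGraph V} {A : Set V}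

lemma Collapsible.completeIn_nbhd (h : Collapsible G A)
    (C : (G.induce Aᶜ).ConnectedComponent) : CompleteIn G (nbhd G (Subtype.val '' C.supp)) := by
  intro u hu v hv huv
  by_contra hadj
  have huA : u ∈ A := by simpa using C.nbhd_subset_compl hu
  have hvA : v ∈ A := by simpa using C.nbhd_subset_compl hv
  obtain ⟨-, m, hm, hum⟩ := hu
  obtain ⟨-, m', hm', hvm'⟩ := hv
  obtain ⟨w, hw⟩ := C.exists_walk_support_subset hm hm'
  have hsep := h {u} {v} ({u, v} : Set V)ᶜ (by simpa) (by simpa) (by simpa)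
    (by simp) (by simp) (separates_compl_pair huv hadj)
  obtain ⟨x, ⟨hxuv, hxA⟩, hx⟩ :=
    hsep.exists_mem_support rfl rfl (.cons hum (w.concat hvm'.symm))
  simp only [Walk.support_cons, Walk.support_concat, List.mem_cons,
    List.mem_append, List.not_mem_nil, or_false] at hx
  rcases hx with rfl | hx | rfl
  · exact hxuv (by simp)
  · exact hw x hx hxA
  · exact hxuv (by simp)

lemma exists_walk_support_subset_of_completeIn_nbhd
    (hcomp : ∀ C : (G.induce Aᶜ).ConnectedComponent,
      CompleteIn G (nbhd G (Subtype.val '' C.supp)))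
    {c b : V} (p : G.Walk c b) (hb : b ∈ A) {a : V} (ha : a ∈ A)
    (hac : a = c ∨ ∃ C : (G.induce Aᶜ).ConnectedComponent,
      a ∈ nbhd G (Subtype.val '' C.supp) ∧ c ∈ Subtype.val '' C.supp) :
    ∃ w : G.Walk a b, ∀ x ∈ w.support, x ∈ A ∧ (x = a ∨ x ∈ p.support) := by
  induction p generalizing a with
  | nil =>
    rcases hac with rfl | ⟨C, -, hcC⟩
    · exact ⟨.nil, by simp [ha]⟩
    · exact absurd hb (C.image_val_supp_subset hcC)
  | @cons c d b hcd p ih =>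
    by_cases hd : d ∈ A
    · obtain ⟨w, hw⟩ := ih hb hd (Or.inl rfl)
      have hwp : ∀ x ∈ w.support, x ∈ A ∧ x ∈ (Walk.cons hcd p).support := by
        intro x hx
        obtain ⟨hxA, rfl | hxp⟩ := hw x hx
        · exact ⟨hxA, by simp⟩
        · exact ⟨hxA, by simp [hxp]⟩
      by_cases had : a = d
      · subst had
        exact ⟨w, fun x hx => ⟨(hwp x hx).1, Or.inr (hwp x hx).2⟩⟩
      have hadj : G.Adj a d := by
        rcases hac with rfl | ⟨C, haC, hcC⟩
        · exact hcd
        · exact hcomp C a haC d (C.mem_nbhd_of_adj (by simpa) hcC hcd.symm) had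
      refine ⟨.cons hadj w, ?_⟩
      intro x hx
      rcases List.mem_cons.1 hx with rfl | hx
      exacts [⟨ha, Or.inl rfl⟩, ⟨(hwp x hx).1, Or.inr (hwp x hx).2⟩]
    · have had : ∃ C : (G.induce Aᶜ).ConnectedComponent,
          a ∈ nbhd G (Subtype.val '' C.supp) ∧ d ∈ Subtype.val '' C.supp := by
        rcases hac with rfl | ⟨C, haC, hcC⟩
        · let C := (G.induce Aᶜ).connectedComponentMk ⟨d, hd⟩
          have hdC : d ∈ Subtype.val '' C.supp := ⟨⟨d, hd⟩, rfl, rfl⟩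
          exact ⟨C, C.mem_nbhd_of_adj (by simpa) hdC hcd, hdC⟩
        · exact ⟨C, haC, C.mem_image_val_supp_of_adj hcC hd hcd⟩
      obtain ⟨w, hw⟩ := ih hb ha (Or.inr had)
      refine ⟨w, fun x hx => ⟨(hw x hx).1, ?_⟩⟩
      rcases (hw x hx).2 with rfl | hxp
      exacts [Or.inl rfl, Or.inr (by simp [hxp])]

lemma collapsible_of_completeIn_nbhd
    (hcomp : ∀ C : (G.induce Aᶜ).ConnectedComponent,
      CompleteIn G (nbhd G (Subtype.val '' C.supp))) : Collapsible G A := by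
  intro X Y Z hXA hYA _ _ _ hsep a b ha hb p _
  obtain ⟨w, hw⟩ := exists_walk_support_subset_of_completeIn_nbhd hcomp p (hYA hb) (hXA ha)
    (Or.inl rfl)
  obtain ⟨x, hxZ, hx⟩ := hsep.exists_mem_support ha hb w
  obtain ⟨hxA, rfl | hxp⟩ := hw x hx
  exacts [⟨x, ⟨hxZ, hxA⟩, p.start_mem_support⟩, ⟨x, ⟨hxZ, hxA⟩, hxp⟩]

end

theorem collapsible_iff_component_neighbours_complete_general
    {V : Type*} (G : SimpleGraph V) (A : Set V) :
    Collapsible G A ↔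
      ∀ M : Set V, IsCompOf G Aᶜ M → CompleteIn G (nbhd G M) := by
  constructor
  · rintro h M ⟨C, rfl⟩
    exact h.completeIn_nbhd C
  · intro h
    exact collapsible_of_completeIn_nbhd fun C => h _ ⟨C, rfl⟩

/-- Asmussen–Edwards: `G` is collapsible onto `A` iff the neighbour set of every
connected component of `G_{V \\ A}` is complete in `G`. -/
theorem collapsible_iff_component_neighbours_complete
    {V : Type*} [Fintype V] (G : SimpleGraph V) (A : Set V) :
    Collapsible G A ↔
      ∀ M : Set V, IsCompOf G Aᶜ M → CompleteIn G (nbhd G M) :=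
  collapsible_iff_component_neighbours_complete_general G A
end

section
/- Let G = (V, E) be a finite simple graph and let x, y ∈ V be non-adjacent vertices. Let M be the vertex set of the connected component containing y of the induced subgraph G_{V \ ({x} ∪ N_G(x))}. Then N_G(M) is a minimal xy-separator in G and N_G(M) ⊆ N_G(x). (Correctness of the CloseSeparator procedure of Takata, on which the CMSA algorithm relies.) -/
/-!
Every path from `x` into `M` must enter `M` through `N(M)`, so `N(M)` separates `x` from
`y`. Since `M` is a component of `G - N[x]`, a vertex of `N(M)` lies in `N[x]` but cannot be
`x` (its neighbour in `M` would lie in `N(x)`), so `N(M) ⊆ N(x)`. Minimality: for each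
`s ∈ N(M)` the path `x, s, w, …, y`, continued inside the connected set `M`, meets `N(M)`
only in `s`.
-/

namespace SimpleGraph

variable {V : Type*} {G : SimpleGraph V}

theorem Walk.exists_mem_nbhd_support {M : Set V} {a b : V} (p : G.Walk a b) (ha : a ∉ M)
    (hb : b ∈ M) : ∃ s ∈ nbhd G M, s ∈ p.support := by
  induction p with
  | nil => exact absurd hb ha
  | @cons u v w huv p ih =>
    by_cases hv : v ∈ M
    · exact ⟨u, ⟨ha, v, hv, huv⟩, by simp⟩
    · obtain ⟨s, hs, hsp⟩ := ih hv hb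
      exact ⟨s, hs, by simp [hsp]⟩

theorem separates_nbhd {X Y M : Set V} (hX : X ⊆ Mᶜ) (hY : Y ⊆ M) :
    Separates G X Y (nbhd G M) :=
  fun _ _ ha hb p _ => p.exists_mem_nbhd_support (hX ha) (hY hb)

theorem isMinSeparator_nbhd {M : Set V} {x y : V} (hxM : x ∉ M) (hyM : y ∈ M)
    (hconn : ∀ a ∈ M, ∃ p : G.Walk a y, ∀ u ∈ p.support, u ∈ M)
    (hfull : nbhd G M ⊆ G.neighborSet x) : IsMinSeparator G x y (nbhd G M) := by
  classical
  have hxS : x ∉ nbhd G M := fun h => G.loopless.irrefl x (hfull h)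
  refine ⟨⟨?_, separates_nbhd (by simpa using hxM) (by simpa using hyM)⟩, ?_⟩
  · rintro v hv (rfl | rfl)
    exacts [hxS hv, hv.1 hyM]
  · rintro T hTS ⟨-, hT⟩
    obtain ⟨s, hsS, hsT⟩ := Set.exists_of_ssubset hTS
    have hxs := hfull hsS
    obtain ⟨-, w, hwM, hsw⟩ := hsS
    obtain ⟨r, hrM⟩ := hconn w hwM
    let q : G.Walk x y := .cons hxs (.cons hsw r)
    obtain ⟨t, htT, htq⟩ := hT rfl rfl q.toPath q.toPath.2
    have htS := hTS.subset htT
    rcases List.mem_cons.1 (q.support_toPath_subset_support htq) with rfl | htq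
    · exact hxS htS
    rcases List.mem_cons.1 (by simpa [q] using htq) with rfl | htr
    · exact hsT htT
    · exact htS.1 (hrM t htr)

end SimpleGraph

namespace IsCompOf

open SimpleGraph

variable {V : Type*} {G : SimpleGraph V} {W M : Set V}

theorem subset (hM : IsCompOf G W M) : M ⊆ W := by
  obtain ⟨c, rfl⟩ := hM
  rintro _ ⟨v, -, rfl⟩
  exact v.2

theorem mem_of_adj (hM : IsCompOf G W M) {v w : V} (hv : v ∈ W) (hw : w ∈ M)
    (hvw : G.Adj v w) : v ∈ M := by
  obtain ⟨c, rfl⟩ := hM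
  obtain ⟨w, hwc, rfl⟩ := hw
  refine ⟨⟨v, hv⟩, ?_, rfl⟩
  rw [ConnectedComponent.mem_supp_iff] at hwc ⊢
  rw [← hwc]
  exact ConnectedComponent.connectedComponentMk_eq_of_adj hvw

theorem nbhd_subset_compl (hM : IsCompOf G W M) : nbhd G M ⊆ Wᶜ :=
  fun _ ⟨hvM, _, hwM, hvw⟩ hvW => hvM (hM.mem_of_adj hvW hwM hvw)

theorem exists_walk_support_subset (hM : IsCompOf G W M) {a b : V} (ha : a ∈ M)
    (hb : b ∈ M) : ∃ p : G.Walk a b, ∀ u ∈ p.support, u ∈ M := by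
  classical
  obtain ⟨c, rfl⟩ := hM
  obtain ⟨a, hac, rfl⟩ := ha
  obtain ⟨b, hbc, rfl⟩ := hb
  rw [ConnectedComponent.mem_supp_iff] at hac hbc
  obtain ⟨p⟩ := ConnectedComponent.exact (hac.trans hbc.symm)
  let φ : G.induce W →g G := (Embedding.induce W).toHom
  refine ⟨p.map φ, fun u hu => ?_⟩
  replace hu : u ∈ (p.map φ).support := hu
  rw [Walk.support_map, List.mem_map] at hu
  obtain ⟨u, hu, rfl⟩ := hu
  refine ⟨u, ?_, rfl⟩
  rw [ConnectedComponent.mem_supp_iff, ← hac]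
  exact (ConnectedComponent.sound (p.takeUntil u hu).reachable).symm

theorem nbhd_subset_neighborSet {x : V} (hM : IsCompOf G ({x} ∪ G.neighborSet x)ᶜ M) :
    nbhd G M ⊆ G.neighborSet x := by
  intro s hs
  rcases not_not.1 (hM.nbhd_subset_compl hs) with rfl | hxs
  · obtain ⟨-, w, hwM, hsw⟩ := hs
    exact absurd (Or.inr hsw) (hM.subset hwM)
  · exact hxs

end IsCompOf

theorem closeSeparator_correct_general
    {V : Type*} (G : SimpleGraph V) (x y : V)
    (M : Set V)
    (hM : IsCompOf G ({x} ∪ G.neighborSet x)ᶜ M) (hyM : y ∈ M) :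
    IsMinSeparator G x y (nbhd G M) ∧ nbhd G M ⊆ G.neighborSet x := by
  have hxM : x ∉ M := fun h => hM.subset h (Or.inl rfl)
  have hsub := hM.nbhd_subset_neighborSet
  exact ⟨G.isMinSeparator_nbhd hxM hyM (fun a ha => hM.exists_walk_support_subset ha hyM) hsub,
    hsub⟩

/-- Correctness of Takata's CloseSeparator procedure: for non-adjacent `x, y`, if `M`
is the vertex set of the connected component containing `y` of the subgraph induced
by `V \\ ({x} ∪ N_G(x))`, then `N_G(M)` is a minimal `xy`-separator contained
in `N_G(x)`. -/
theorem closeSeparator_correct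
    {V : Type*} [Fintype V] (G : SimpleGraph V) (x y : V)
    (hne : x ≠ y) (hadj : ¬ G.Adj x y) (M : Set V)
    (hM : IsCompOf G ({x} ∪ G.neighborSet x)ᶜ M) (hyM : y ∈ M) :
    IsMinSeparator G x y (nbhd G M) ∧ nbhd G M ⊆ G.neighborSet x :=
  closeSeparator_correct_general G x y M hM hyM
end

section
/- Let G = (V, E) be a finite simple graph. If G is collapsible onto B₁ ⊆ V and G is collapsible onto B₂ ⊆ V, then G is collapsible onto B₁ ∩ B₂. -/
/-- Collapsibility is closed under intersection. -/
theorem collapsible_inter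
    {V : Type*} [Fintype V] (G : SimpleGraph V) (B₁ B₂ : Set V)
    (h₁ : Collapsible G B₁) (h₂ : Collapsible G B₂) :
    Collapsible G (B₁ ∩ B₂) := by
  intro X Y Z hX hY hXY hXZ hYZ hsep
  have s1 := h₁ X Y Z (fun x hx => (hX hx).1) (fun y hy => (hY hy).1) hXY hXZ hYZ hsep
  have s2 := h₂ X Y (Z ∩ B₁) (fun x hx => (hX hx).2) (fun y hy => (hY hy).2) hXY
    (hXZ.mono_right Set.inter_subset_left) (hYZ.mono_right Set.inter_subset_left) s1
  rw [show Z ∩ (B₁ ∩ B₂) = Z ∩ B₁ ∩ B₂ from (Set.inter_assoc _ _ _).symm]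
  exact s2
end

section
/- Let G = (V, E) be a finite simple graph and let A ⊆ V. Then there exists a unique set B with A ⊆ B ⊆ V such that G is collapsible onto B and B ⊆ C for every set C with A ⊆ C ⊆ V onto which G is collapsible; that is, the minimal collapsible set containing A exists and is unique. (The existence and uniqueness of minimal collapsible sets, which Theorem 2 of the paper relies on: the CMSA output equals this set B.) -/
/-!
If `G` is collapsible onto `B` and onto `C`, it is collapsible onto `B ∩ C`: a separator `Z` of
`X, Y ⊆ B ∩ C` may first be cut down to `Z ∩ B` and then to `Z ∩ B ∩ C`. So the sets containing
`A` onto which `G` collapses form a family closed under intersection, nonempty because it contains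
`V`; over a finite vertex set its minimal member is therefore its least member.
-/

theorem InfClosed.exists_isLeast {α : Type*} [SemilatticeInf α] [WellFoundedLT α] {s : Set α}
    (hs : InfClosed s) (hne : s.Nonempty) : ∃ a, IsLeast s a := by
  obtain ⟨a, has, hmin⟩ := exists_minimal_of_wellFoundedLT (· ∈ s) hne
  exact ⟨a, has, fun b hbs => (le_inf_iff.mp (hmin (hs has hbs) inf_le_left)).2⟩

theorem collapsible_univ {V : Type*} (G : SimpleGraph V) : Collapsible G Set.univ := by
  intro X Y Z _ _ _ _ _ hsep
  rwa [Set.inter_univ]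

theorem Collapsible.inter {V : Type*} {G : SimpleGraph V} {B C : Set V}
    (hB : Collapsible G B) (hC : Collapsible G C) : Collapsible G (B ∩ C) := by
  intro X Y Z hXBC hYBC hXY hXZ hYZ hsep
  have hsepB : Separates G X Y (Z ∩ B) :=
    hB X Y Z (hXBC.trans Set.inter_subset_left) (hYBC.trans Set.inter_subset_left)
      hXY hXZ hYZ hsep
  have hsepBC : Separates G X Y (Z ∩ B ∩ C) :=
    hC X Y (Z ∩ B) (hXBC.trans Set.inter_subset_right) (hYBC.trans Set.inter_subset_right)
      hXY (hXZ.mono_right Set.inter_subset_left) (hYZ.mono_right Set.inter_subset_left) hsepB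
  rwa [Set.inter_assoc] at hsepBC

theorem infClosed_collapsible_superset {V : Type*} (G : SimpleGraph V) (A : Set V) :
    InfClosed {C : Set V | A ⊆ C ∧ Collapsible G C} :=
  fun _ ⟨hAB, hB⟩ _ ⟨hAC, hC⟩ => ⟨Set.subset_inter hAB hAC, hB.inter hC⟩

/-- Existence and uniqueness of the minimal collapsible set containing `A`. -/
theorem exists_unique_minimal_collapsible_set
    {V : Type*} [Fintype V] (G : SimpleGraph V) (A : Set V) :
    ∃! B : Set V, A ⊆ B ∧ Collapsible G B ∧
      ∀ C : Set V, A ⊆ C → Collapsible G C → B ⊆ C := by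
  have hne : {C : Set V | A ⊆ C ∧ Collapsible G C}.Nonempty :=
    ⟨Set.univ, Set.subset_univ A, collapsible_univ G⟩
  obtain ⟨B, ⟨hAB, hB⟩, hleast⟩ := (infClosed_collapsible_superset G A).exists_isLeast hne
  refine ⟨B, ⟨hAB, hB, fun C hAC hC => hleast ⟨hAC, hC⟩⟩, ?_⟩
  rintro B' ⟨hAB', hB', hleast'⟩
  exact (hleast' B hAB hB).antisymm (hleast ⟨hAB', hB'⟩)
end

section
/- Let G = (V, E) be a finite simple graph and let A ⊆ V. Then G is collapsible onto A if and only if for every pair of non-adjacent vertices x, y ∈ A and every set Z ⊆ V \ {x, y}, whenever Z separates {x} from {y} in G, the set Z ∩ A also separates {x} from {y} in G. (The reduction of the set-separation condition of Asmussen and Edwards to a pairwise-vertex condition, implicit in the proof of Theorem 1 of the paper.) -/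
/-- The set-separation condition of Asmussen–Edwards reduces to a pairwise-vertex
condition over non-adjacent pairs in `A`. -/
theorem collapsible_iff_pairwise_condition
    {V : Type*} [Fintype V] (G : SimpleGraph V) (A : Set V) :
    Collapsible G A ↔
      ∀ x ∈ A, ∀ y ∈ A, x ≠ y → ¬ G.Adj x y →
        ∀ Z : Set V, Z ⊆ ({x, y} : Set V)ᶜ →
          Separates G {x} {y} Z → Separates G {x} {y} (Z ∩ A) := by
  constructor
  · intro h x hx y hy hxy hadj Z hZ hsep
    refine h {x} {y} Z (by simpa) (by simpa) (by simpa) ?_ ?_ hsep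
    · rw [Set.disjoint_singleton_left]
      intro hxZ
      exact (hZ hxZ) (by simp)
    · rw [Set.disjoint_singleton_left]
      intro hyZ
      exact (hZ hyZ) (by simp)
  · intro h X Y Z hXA hYA hXY hXZ hYZ hsep a b ha hb p hp
    have hab : a ≠ b := by
      rintro rfl
      exact Set.disjoint_left.mp hXY ha hb
    have haZ : a ∉ Z := Set.disjoint_left.mp hXZ ha
    have hbZ : b ∉ Z := Set.disjoint_left.mp hYZ hb
    have hadj : ¬ G.Adj a b := by
      intro hadj
      obtain ⟨s, hsZ, hs⟩ := hsep ha hb (SimpleGraph.Walk.cons hadj SimpleGraph.Walk.nil)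
        (by simp [SimpleGraph.Walk.cons_isPath_iff, hab])
      simp only [SimpleGraph.Walk.support_cons, SimpleGraph.Walk.support_nil,
        List.mem_cons, List.mem_singleton, List.not_mem_nil, or_false] at hs
      rcases hs with rfl | rfl
      · exact haZ hsZ
      · exact hbZ hsZ
    have hsub : Z ⊆ ({a, b} : Set V)ᶜ := by
      intro s hsZ hs
      rcases hs with rfl | rfl
      · exact haZ hsZ
      · exact hbZ hsZ
    have hsep' : Separates G {a} {b} Z := by
      rintro c d (rfl : c = a) (rfl : d = b) q hq
      exact hsep ha hb q hq
    exact h a (hXA ha) b (hYA hb) hab hadj Z hsub hsep' rfl rfl p hp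
end
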